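/- Assume the Halpern setting: Q* : S × A → ℝ and g* ∈ ℝ satisfy 𝒯 Q* = Q* + g* • 1, ε ≥ 0, n ≥ 1, sequences Q, T : ℕ → (S × A → ℝ) satisfy Q k = (2/(k+2)) • Q 0 + (k/(k+2)) • T (k−1) for all 1 ≤ k ≤ n and ‖T k − 𝒯 (Q k)‖∞ ≤ ε for all 0 ≤ k ≤ n, and Sp(T k − T (k−1)) ≤ Sp(Q k − Q (k−1)) for all 1 ≤ k ≤ n. Then Sp(𝒯 (Q n) − Q n) ≤ 8 * Sp(Q 0 − Q*) / (n+2) + 4 * ε. -/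

import Mathlib

open Finset

noncomputable def supNorm {X : Type*} [Fintype X] [Nonempty X] (v : X → ℝ) : ℝ :=
  Finset.univ.sup' Finset.univ_nonempty fun x => |v x|

noncomputable def spanSN {X : Type*} [Fintype X] [Nonempty X] (v : X → ℝ) : ℝ :=
  (Finset.univ.sup' Finset.univ_nonempty v) - (Finset.univ.inf' Finset.univ_nonempty v)

noncomputable def sigma' {S A : Type*} [Fintype S] (P : S → A → Set (S → ℝ))
    (h : S → ℝ) (s : S) (a : A) : ℝ :=
  sInf {x : ℝ | ∃ p ∈ P s a, x = ∑ s', p s' * h s'}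

noncomputable def bellman {S A : Type*} [Fintype S] [Fintype A] [Nonempty A]
    (P : S → A → Set (S → ℝ)) (r : S → A → ℝ) (Q : S × A → ℝ) : S × A → ℝ :=
  fun sa => r sa.1 sa.2 +
    sigma' P (fun s' => Finset.univ.sup' Finset.univ_nonempty fun a' => Q (s', a')) sa.1 sa.2

/-!
The robust Bellman operator is nonexpansive for the span seminorm: each support function
`σ (·) (s, a)` and the maximum over actions are monotone and commute with adding constants, and
`𝒯 Q* = Q* + g* • 1` then gives `Sp (𝒯 Q - Q*) ≤ Sp (Q - Q*)`. So each `T k` is within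
`Sp (Q k - Q*) + 2ε` of `Q*`, and the rest is the Halpern analysis for an arbitrary seminorm `p`.
With `D k = p (T k - T (k - 1))`, the identity
`Q (k+1) - Q k = (k+1)/(k+3) • (T k - T (k-1)) + 2/((k+2)(k+3)) • (T (k-1) - Q 0)` yields
`(k+2)(k+3) D (k+1) ≤ (k+1)(k+2) D k + 2 p (T (k-1) - Q 0)`, where the anchor distances
`p (T j - Q 0)` grow only like `j ε / 3`; hence `(n+1)(n+2) D n = O(n)`, and
`T n - Q n = (T n - T (n-1)) + 2/(n+2) • (T (n-1) - Q 0)` is of order `1/n` up to `2ε`.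
-/

theorem Seminorm.sub_le {𝕜 E : Type*} [SeminormedRing 𝕜] [AddGroup E] [SMul 𝕜 E]
    (p : Seminorm 𝕜 E) (a b c : E) : p (a - c) ≤ p (a - b) + p (b - c) := by
  simpa only [sub_add_sub_cancel] using map_add_le_add p (a - b) (b - c)

theorem Seminorm.smul_add_smul_le {E : Type*} [AddCommGroup E] [Module ℝ E] (p : Seminorm ℝ E)
    {a b : ℝ} (ha : 0 ≤ a) (hb : 0 ≤ b) (u v : E) :
    p (a • u + b • v) ≤ a * p u + b * p v := by
  simpa only [map_smul_eq_mul, Real.norm_of_nonneg ha, Real.norm_of_nonneg hb]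
    using map_add_le_add p (a • u) (b • v)

section Span

variable {X : Type*} [Fintype X] [Nonempty X]

theorem spanSN_le_of_bounds {v : X → ℝ} {m M : ℝ} (hM : ∀ x, v x ≤ M) (hm : ∀ x, m ≤ v x) :
    spanSN v ≤ M - m :=
  sub_le_sub (sup'_le _ _ fun x _ => hM x) (le_inf' _ _ fun x _ => hm x)

theorem spanSN_add_le (u v : X → ℝ) : spanSN (u + v) ≤ spanSN u + spanSN v :=
  calc spanSN (u + v)
      ≤ (univ.sup' univ_nonempty u + univ.sup' univ_nonempty v) -
          (univ.inf' univ_nonempty u + univ.inf' univ_nonempty v) :=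
        spanSN_le_of_bounds
          (fun x => add_le_add (le_sup' u (mem_univ x)) (le_sup' v (mem_univ x)))
          (fun x => add_le_add (inf'_le u (mem_univ x)) (inf'_le v (mem_univ x)))
    _ = spanSN u + spanSN v := by unfold spanSN; ring

theorem spanSN_smul_le (c : ℝ) (v : X → ℝ) : spanSN (c • v) ≤ ‖c‖ * spanSN v := by
  have hsup (x : X) : v x ≤ univ.sup' univ_nonempty v := le_sup' v (mem_univ x)
  have hinf (x : X) : univ.inf' univ_nonempty v ≤ v x := inf'_le v (mem_univ x)
  rcases le_total 0 c with hc | hc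
  · calc spanSN (c • v) ≤ c * univ.sup' univ_nonempty v - c * univ.inf' univ_nonempty v :=
          spanSN_le_of_bounds (fun x => mul_le_mul_of_nonneg_left (hsup x) hc)
            (fun x => mul_le_mul_of_nonneg_left (hinf x) hc)
      _ = ‖c‖ * spanSN v := by rw [Real.norm_of_nonneg hc, spanSN, mul_sub]
  · calc spanSN (c • v) ≤ c * univ.inf' univ_nonempty v - c * univ.sup' univ_nonempty v :=
          spanSN_le_of_bounds (fun x => mul_le_mul_of_nonpos_left (hinf x) hc)
            (fun x => mul_le_mul_of_nonpos_left (hsup x) hc)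
      _ = ‖c‖ * spanSN v := by rw [Real.norm_of_nonpos hc, spanSN]; ring

variable (X) in
noncomputable def spanSeminorm : Seminorm ℝ (X → ℝ) :=
  Seminorm.ofSMulLE spanSN (by simp [spanSN]) spanSN_add_le spanSN_smul_le

theorem spanSeminorm_smul_one (c : ℝ) : spanSeminorm X (c • 1) = 0 :=
  le_antisymm
    ((spanSN_le_of_bounds (M := c) (m := c) (by simp) (by simp)).trans_eq (sub_self c))
    (apply_nonneg _ _)

theorem spanSN_le_two_mul_supNorm (v : X → ℝ) : spanSN v ≤ 2 * supNorm v := by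
  have h (x : X) : |v x| ≤ supNorm v := le_sup' (fun x => |v x|) (mem_univ x)
  calc spanSN v ≤ supNorm v - -supNorm v :=
        spanSN_le_of_bounds (fun x => (le_abs_self _).trans (h x)) (fun x => neg_le_of_abs_le (h x))
    _ = 2 * supNorm v := by ring

end Span

section RobustBellman

variable {S A : Type*} [Fintype S] {P : S → A → Set (S → ℝ)}

theorem stdSimplex_sum_mul_le_add {p : S → ℝ} (hp : p ∈ stdSimplex ℝ S) {h h' : S → ℝ} {c : ℝ}
    (hle : ∀ s, h s ≤ h' s + c) : ∑ s, p s * h s ≤ ∑ s, p s * h' s + c :=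
  calc ∑ s, p s * h s ≤ ∑ s, p s * (h' s + c) :=
        sum_le_sum fun s _ => mul_le_mul_of_nonneg_left (hle s) (hp.1 s)
    _ = ∑ s, p s * h' s + c := by simp only [mul_add, sum_add_distrib, ← sum_mul, hp.2, one_mul]

variable [Nonempty S]

theorem sigma'_le_add {s : S} {a : A} (hne : (P s a).Nonempty) (hsub : P s a ⊆ stdSimplex ℝ S)
    {h h' : S → ℝ} {c : ℝ} (hle : ∀ s', h s' ≤ h' s' + c) :
    sigma' P h s a ≤ sigma' P h' s a + c := by
  have hbdd : BddBelow {x | ∃ p ∈ P s a, x = ∑ s', p s' * h s'} := by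
    refine ⟨univ.inf' univ_nonempty h, ?_⟩
    rintro _ ⟨p, hp, rfl⟩
    have := stdSimplex_sum_mul_le_add (hsub hp) (h := fun _ => univ.inf' univ_nonempty h) (h' := h)
      (c := 0) fun s' => (inf'_le h (mem_univ s')).trans_eq (add_zero _).symm
    rwa [← sum_mul, (hsub hp).2, one_mul, add_zero] at this
  obtain ⟨p₀, hp₀⟩ := hne
  rw [sigma', sigma', ← sub_le_iff_le_add]
  refine le_csInf ⟨_, p₀, hp₀, rfl⟩ ?_
  rintro _ ⟨p, hp, rfl⟩
  exact sub_le_iff_le_add.2 <|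
    (csInf_le hbdd ⟨p, hp, rfl⟩).trans (stdSimplex_sum_mul_le_add (hsub hp) hle)

variable [Fintype A] [Nonempty A]

theorem bellman_le_add (hne : ∀ s a, (P s a).Nonempty) (hsub : ∀ s a, P s a ⊆ stdSimplex ℝ S)
    (r : S → A → ℝ) {X Y : S × A → ℝ} {c : ℝ} (hle : ∀ sa, X sa ≤ Y sa + c) (sa : S × A) :
    bellman P r X sa ≤ bellman P r Y sa + c := by
  have hmax (s' : S) : univ.sup' univ_nonempty (fun a' => X (s', a')) ≤
      univ.sup' univ_nonempty (fun a' => Y (s', a')) + c :=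
    sup'_le _ _ fun a' _ =>
      (hle _).trans (by gcongr; exact le_sup' (fun a' => Y (s', a')) (mem_univ a'))
  have := sigma'_le_add (hne sa.1 sa.2) (hsub sa.1 sa.2) hmax
  simp only [bellman]
  linarith

theorem spanSN_bellman_sub_le (hne : ∀ s a, (P s a).Nonempty)
    (hsub : ∀ s a, P s a ⊆ stdSimplex ℝ S) (r : S → A → ℝ) (X Y : S × A → ℝ) :
    spanSN (bellman P r X - bellman P r Y) ≤ spanSN (X - Y) := by
  have hsup (sa : S × A) : X sa ≤ Y sa + univ.sup' univ_nonempty (X - Y) := by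
    linarith [le_sup' (X - Y) (mem_univ sa), Pi.sub_apply X Y sa]
  have hinf (sa : S × A) : Y sa ≤ X sa + -univ.inf' univ_nonempty (X - Y) := by
    linarith [inf'_le (X - Y) (mem_univ sa), Pi.sub_apply X Y sa]
  refine spanSN_le_of_bounds (fun sa => ?_) (fun sa => ?_)
  · linarith [bellman_le_add hne hsub r hsup sa, Pi.sub_apply (bellman P r X) (bellman P r Y) sa]
  · linarith [bellman_le_add hne hsub r hinf sa, Pi.sub_apply (bellman P r X) (bellman P r Y) sa]

theorem spanSN_bellman_sub_fixed_le (hne : ∀ s a, (P s a).Nonempty)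
    (hsub : ∀ s a, P s a ⊆ stdSimplex ℝ S) (r : S → A → ℝ) {Qstar : S × A → ℝ} {g : ℝ}
    (hstar : bellman P r Qstar = Qstar + g • 1) (X : S × A → ℝ) :
    spanSN (bellman P r X - Qstar) ≤ spanSN (X - Qstar) :=
  calc spanSeminorm (S × A) (bellman P r X - Qstar)
      = spanSeminorm (S × A) ((bellman P r X - bellman P r Qstar) + g • 1) := by
        rw [hstar, sub_add_eq_add_sub, add_sub_add_right_eq_sub]
    _ ≤ spanSeminorm (S × A) (bellman P r X - bellman P r Qstar) + spanSeminorm (S × A) (g • 1) :=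
        map_add_le_add _ _ _
    _ ≤ spanSN (X - Qstar) := by
        rw [spanSeminorm_smul_one, add_zero]
        exact spanSN_bellman_sub_le hne hsub r X Qstar

end RobustBellman

section Halpern

variable {E : Type*} [AddCommGroup E] [Module ℝ E]

def HalpernIterates (Q T : ℕ → E) (n : ℕ) : Prop :=
  ∀ k, 1 ≤ k → k ≤ n → Q k = (2 / ((k : ℝ) + 2)) • Q 0 + ((k : ℝ) / ((k : ℝ) + 2)) • T (k - 1)

namespace HalpernIterates

variable {Q T : ℕ → E} {n : ℕ} (p : Seminorm ℝ E) {x : E} {δ : ℝ}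

theorem eq (h : HalpernIterates Q T n) {k : ℕ} (hk : k ≤ n) :
    Q k = (2 / ((k : ℝ) + 2)) • Q 0 + ((k : ℝ) / ((k : ℝ) + 2)) • T (k - 1) := by
  rcases Nat.eq_zero_or_pos k with rfl | hk₀
  · simp
  · exact h k hk₀ hk

theorem succ_sub_eq (h : HalpernIterates Q T n) {k : ℕ} (hk : k + 1 ≤ n) (y : E) :
    Q (k + 1) - y =
      (2 / ((k : ℝ) + 3)) • (Q 0 - y) + (((k : ℝ) + 1) / ((k : ℝ) + 3)) • (T k - y) := by
  rw [h.eq hk]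
  push_cast
  match_scalars <;> field_simp <;> ring

-- Also at `k = 0`, where `T (0 - 1) = T 0` makes the first term vanish.
theorem succ_sub_self_eq (h : HalpernIterates Q T n) {k : ℕ} (hk : k + 1 ≤ n) :
    Q (k + 1) - Q k = (((k : ℝ) + 1) / ((k : ℝ) + 3)) • (T k - T (k - 1)) +
      (2 / (((k : ℝ) + 2) * ((k : ℝ) + 3))) • (T (k - 1) - Q 0) := by
  rw [h.eq hk, h.eq (by omega : k ≤ n)]
  push_cast
  match_scalars <;> field_simp <;> ring

theorem sub_eq (h : HalpernIterates Q T n) :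
    T n - Q n = (T n - T (n - 1)) + (2 / ((n : ℝ) + 2)) • (T (n - 1) - Q 0) := by
  rw [h.eq le_rfl]
  match_scalars <;> field_simp
  ring

theorem seminorm_sub_fixed_le (h : HalpernIterates Q T n)
    (hT : ∀ k ≤ n, p (T k - x) ≤ p (Q k - x) + δ) :
    ∀ k ≤ n, p (Q k - x) ≤ p (Q 0 - x) + (k : ℝ) / 3 * δ := by
  intro k
  induction k with
  | zero => simp
  | succ k ih =>
    intro hk
    have hTk : p (T k - x) ≤ p (Q 0 - x) + ((k : ℝ) / 3 + 1) * δ := by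
      linarith [hT k (by omega), ih (by omega)]
    calc p (Q (k + 1) - x)
        ≤ 2 / ((k : ℝ) + 3) * p (Q 0 - x) + ((k : ℝ) + 1) / ((k : ℝ) + 3) * p (T k - x) := by
          rw [h.succ_sub_eq hk]
          exact p.smul_add_smul_le (by positivity) (by positivity) _ _
      _ ≤ 2 / ((k : ℝ) + 3) * p (Q 0 - x) +
            ((k : ℝ) + 1) / ((k : ℝ) + 3) * (p (Q 0 - x) + ((k : ℝ) / 3 + 1) * δ) := by
          gcongr
      _ = p (Q 0 - x) + ((k + 1 : ℕ) : ℝ) / 3 * δ := by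
          push_cast
          field_simp
          ring

theorem seminorm_sub_anchor_le (h : HalpernIterates Q T n)
    (hT : ∀ k ≤ n, p (T k - x) ≤ p (Q k - x) + δ) {k : ℕ} (hk : k ≤ n) :
    p (T k - Q 0) ≤ 2 * p (Q 0 - x) + ((k : ℝ) / 3 + 1) * δ := by
  have hQk := h.seminorm_sub_fixed_le p hT k hk
  calc p (T k - Q 0) ≤ p (T k - x) + p (Q 0 - x) := by
        simpa only [map_sub_rev p x] using p.sub_le (T k) x (Q 0)
    _ ≤ 2 * p (Q 0 - x) + ((k : ℝ) / 3 + 1) * δ := by linarith [hT k hk]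

theorem seminorm_succ_sub_le (h : HalpernIterates Q T n)
    (hlip : ∀ k, 1 ≤ k → k ≤ n → p (T k - T (k - 1)) ≤ p (Q k - Q (k - 1)))
    {k : ℕ} (hk : k + 1 ≤ n) :
    ((k : ℝ) + 2) * ((k : ℝ) + 3) * p (T (k + 1) - T k) ≤
      ((k : ℝ) + 1) * ((k : ℝ) + 2) * p (T k - T (k - 1)) + 2 * p (T (k - 1) - Q 0) :=
  calc ((k : ℝ) + 2) * ((k : ℝ) + 3) * p (T (k + 1) - T k)
      ≤ ((k : ℝ) + 2) * ((k : ℝ) + 3) * p (Q (k + 1) - Q k) := by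
        gcongr
        exact hlip (k + 1) (by omega) hk
    _ ≤ ((k : ℝ) + 2) * ((k : ℝ) + 3) * (((k : ℝ) + 1) / ((k : ℝ) + 3) * p (T k - T (k - 1)) +
          2 / (((k : ℝ) + 2) * ((k : ℝ) + 3)) * p (T (k - 1) - Q 0)) := by
        gcongr
        rw [h.succ_sub_self_eq hk]
        exact p.smul_add_smul_le (by positivity) (by positivity) _ _
    _ = ((k : ℝ) + 1) * ((k : ℝ) + 2) * p (T k - T (k - 1)) + 2 * p (T (k - 1) - Q 0) := by
        field_simp

theorem seminorm_sub_pred_le (h : HalpernIterates Q T n)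
    (hT : ∀ k ≤ n, p (T k - x) ≤ p (Q k - x) + δ)
    (hlip : ∀ k, 1 ≤ k → k ≤ n → p (T k - T (k - 1)) ≤ p (Q k - Q (k - 1)))
    {k : ℕ} (hk₁ : 1 ≤ k) (hk : k ≤ n) :
    ((k : ℝ) + 1) * ((k : ℝ) + 2) * p (T k - T (k - 1)) ≤
      4 * k * p (Q 0 - x) + (2 * k + ((k : ℝ) - 1) * ((k : ℝ) - 2) / 3) * δ := by
  induction k, hk₁ using Nat.le_induction with
  | base =>
    have hstep := h.seminorm_succ_sub_le p hlip (k := 0) hk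
    have hanchor := h.seminorm_sub_anchor_le p hT (k := 0) (by omega)
    simp only [Nat.zero_sub, sub_self, map_zero] at hstep
    push_cast at hstep hanchor ⊢
    linarith
  | succ k hk₁ ih =>
    have hstep := h.seminorm_succ_sub_le p hlip hk
    have hanchor := h.seminorm_sub_anchor_le p hT (k := k - 1) (by omega)
    rw [Nat.cast_sub hk₁, Nat.cast_one] at hanchor
    push_cast
    linear_combination hstep + ih (by omega) + 2 * hanchor

theorem seminorm_sub_le (h : HalpernIterates Q T n)
    (hT : ∀ k ≤ n, p (T k - x) ≤ p (Q k - x) + δ)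
    (hlip : ∀ k, 1 ≤ k → k ≤ n → p (T k - T (k - 1)) ≤ p (Q k - Q (k - 1))) :
    p (T n - Q n) ≤ 8 * p (Q 0 - x) / ((n : ℝ) + 2) + δ := by
  rcases Nat.eq_zero_or_pos n with rfl | hn
  · have hanchor := h.seminorm_sub_anchor_le p hT le_rfl
    norm_num at hanchor ⊢
    linarith [apply_nonneg p (Q 0 - x)]
  have hpred := h.seminorm_sub_pred_le p hT hlip hn le_rfl
  have hanchor := h.seminorm_sub_anchor_le p hT (k := n - 1) (by omega)
  rw [Nat.cast_sub hn, Nat.cast_one] at hanchor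
  have hn₀ : (0 : ℝ) < ((n : ℝ) + 1) * ((n : ℝ) + 2) := by positivity
  refine le_of_mul_le_mul_left ?_ hn₀
  calc ((n : ℝ) + 1) * ((n : ℝ) + 2) * p (T n - Q n)
      ≤ ((n : ℝ) + 1) * ((n : ℝ) + 2) *
          (p (T n - T (n - 1)) + 2 / ((n : ℝ) + 2) * p (T (n - 1) - Q 0)) := by
        gcongr
        rw [h.sub_eq]
        refine (map_add_le_add p _ _).trans_eq ?_
        rw [map_smul_eq_mul, Real.norm_of_nonneg (by positivity)]
    _ = ((n : ℝ) + 1) * ((n : ℝ) + 2) * p (T n - T (n - 1)) +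
          2 * ((n : ℝ) + 1) * p (T (n - 1) - Q 0) := by
        field_simp
    _ ≤ (8 * n + 4) * p (Q 0 - x) + ((n : ℝ) + 1) * ((n : ℝ) + 2) * δ := by
        linear_combination hpred + 2 * ((n : ℝ) + 1) * hanchor
    _ ≤ ((n : ℝ) + 1) * ((n : ℝ) + 2) * (8 * p (Q 0 - x) / ((n : ℝ) + 2) + δ) := by
        field_simp
        nlinarith [apply_nonneg p (Q 0 - x)]

end HalpernIterates
end Halpern

theorem stmt18_general {S A : Type*} [Fintype S] [Fintype A] [Nonempty S] [Nonempty A]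
    (P : S → A → Set (S → ℝ))
    (hne : ∀ s a, (P s a).Nonempty)
    (hsub : ∀ s a, P s a ⊆ stdSimplex ℝ S)
    (r : S → A → ℝ)
    (Qstar : S × A → ℝ) (gstar : ℝ)
    (hstar : bellman P r Qstar = Qstar + gstar • (1 : S × A → ℝ))
    (ε : ℝ) (n : ℕ)
    (Q T : ℕ → (S × A → ℝ))
    (hrec : ∀ k, 1 ≤ k → k ≤ n →
      Q k = (2 / ((k : ℝ) + 2)) • Q 0 + ((k : ℝ) / ((k : ℝ) + 2)) • T (k - 1))
    (happrox : ∀ k ≤ n, supNorm (T k - bellman P r (Q k)) ≤ ε)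
    (hTQ : ∀ k, 1 ≤ k → k ≤ n → spanSN (T k - T (k - 1)) ≤ spanSN (Q k - Q (k - 1))) :
    spanSN (bellman P r (Q n) - Q n) ≤
      8 * spanSN (Q 0 - Qstar) / ((n : ℝ) + 2) + 4 * ε := by
  set p := spanSeminorm (S × A)
  have happrox' (k : ℕ) (hk : k ≤ n) : p (bellman P r (Q k) - T k) ≤ 2 * ε := by
    rw [map_sub_rev]
    exact (spanSN_le_two_mul_supNorm _).trans (by linarith [happrox k hk])
  have hT (k : ℕ) (hk : k ≤ n) : p (T k - Qstar) ≤ p (Q k - Qstar) + 2 * ε :=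
    calc p (T k - Qstar) ≤ p (T k - bellman P r (Q k)) + p (bellman P r (Q k) - Qstar) :=
          p.sub_le _ _ _
      _ ≤ 2 * ε + p (Q k - Qstar) := by
          rw [map_sub_rev]
          exact add_le_add (happrox' k hk)
            (spanSN_bellman_sub_fixed_le hne hsub r hstar (Q k))
      _ = p (Q k - Qstar) + 2 * ε := add_comm _ _
  calc p (bellman P r (Q n) - Q n) ≤ p (bellman P r (Q n) - T n) + p (T n - Q n) :=
        p.sub_le _ _ _
    _ ≤ 2 * ε + (8 * p (Q 0 - Qstar) / ((n : ℝ) + 2) + 2 * ε) :=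
        add_le_add (happrox' n le_rfl) (HalpernIterates.seminorm_sub_le p hrec hT hTQ)
    _ = 8 * p (Q 0 - Qstar) / ((n : ℝ) + 2) + 4 * ε := by ring

/-- Deterministic core of the paper's Theorem 5 (Theorem A1): residual span bound
for Robust Halpern Iteration with inexact operator evaluations. -/
theorem stmt18 {S A : Type*} [Fintype S] [Fintype A] [Nonempty S] [Nonempty A]
    (P : S → A → Set (S → ℝ))
    (hne : ∀ s a, (P s a).Nonempty)
    (hsub : ∀ s a, P s a ⊆ stdSimplex ℝ S)
    (r : S → A → ℝ)
    (Qstar : S × A → ℝ) (gstar : ℝ)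
    (hstar : bellman P r Qstar = Qstar + gstar • (1 : S × A → ℝ))
    (ε : ℝ) (hε : 0 ≤ ε) (n : ℕ) (hn : 1 ≤ n)
    (Q T : ℕ → (S × A → ℝ))
    (hrec : ∀ k, 1 ≤ k → k ≤ n →
      Q k = (2 / ((k : ℝ) + 2)) • Q 0 + ((k : ℝ) / ((k : ℝ) + 2)) • T (k - 1))
    (happrox : ∀ k ≤ n, supNorm (T k - bellman P r (Q k)) ≤ ε)
    (hTQ : ∀ k, 1 ≤ k → k ≤ n → spanSN (T k - T (k - 1)) ≤ spanSN (Q k - Q (k - 1))) :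
    spanSN (bellman P r (Q n) - Q n) ≤
      8 * spanSN (Q 0 - Qstar) / ((n : ℝ) + 2) + 4 * ε :=
  stmt18_general P hne hsub r Qstar gstar hstar ε n Q T hrec happrox hTQ
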